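/- Let n be a natural number, L a set of primes, and G a closed subgroup of the product ∏_{ℓ∈L} GL_n(ℤ_ℓ). If G satisfies condition (+) potentially, i.e. G has an open subgroup H satisfying condition (+), then G has an open normal subgroup which satisfies condition (+). -/

import Mathlib

open Matrix

instance (p : Nat.Primes) : Fact (p : ℕ).Prime := ⟨p.2⟩

/-- A profinite group `H` is generated by its `ℓ`-Sylow subgroups, expressed equivalently as:
every open normal subgroup of `H` whose index is finite and coprime to `ℓ` equals `H`. -/
def GenBySylow (H : Type*) [Group H] [TopologicalSpace H] (ℓ : ℕ) : Prop :=
  ∀ N : Subgroup H, N.Normal → IsOpen (N : Set H) → N.index ≠ 0 →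
    Nat.Coprime N.index ℓ → N = ⊤

/-- A subgroup `H` of `∏_{ℓ ∈ L} GL n ℤ_[ℓ]` satisfies condition (+) if for all but finitely
many `ℓ ∈ L` the projection `pr_ℓ(H)` is generated by its `ℓ`-Sylow subgroups. -/
def CondPlus (n : ℕ) (L : Set Nat.Primes)
    (H : Subgroup (Π ℓ : L, GL (Fin n) ℤ_[((ℓ : Nat.Primes) : ℕ)])) : Prop :=
  {ℓ : L | ¬ GenBySylow (H.map (Pi.evalMonoidHom _ ℓ)) ((ℓ : Nat.Primes) : ℕ)}.Finite

/-!
Let `H` be open in the compact group `G` and let `N` be its normal core in `G`: an open normal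
subgroup of `G` of some finite index `m` in `H`. For every prime `ℓ > m`, the projection
`pr_ℓ(N)` is a closed, hence open, normal subgroup of `pr_ℓ(H)` whose index divides `m`, so is
prime to `ℓ`. Where `pr_ℓ(H)` is generated by its `ℓ`-Sylow subgroups this forces
`pr_ℓ(N) = pr_ℓ(H)`; hence `N` inherits condition (+) from `H`, up to the finitely many `ℓ ≤ m`.
-/

instance Matrix.compactSpace {m n R : Type*} [TopologicalSpace R] [CompactSpace R] :
    CompactSpace (Matrix m n R) :=
  inferInstanceAs (CompactSpace (m → n → R))

namespace Subgroup

theorem relIndex_map_dvd {Γ K : Type*} [Group Γ] [Group K] (f : Γ →* K) (N H : Subgroup Γ) :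
    (N.map f).relIndex (H.map f) ∣ N.relIndex H := by
  rw [← relIndex_comap]
  exact relIndex_dvd_of_le_left H (le_comap_map f N)

variable {Γ : Type*} [Group Γ] [TopologicalSpace Γ] [IsTopologicalGroup Γ]

theorem finiteIndex_of_isOpen [CompactSpace Γ] {U : Subgroup Γ} (hU : IsOpen (U : Set Γ)) :
    U.FiniteIndex :=
  have : Finite (Γ ⧸ U) := quotient_finite_of_isOpen U hU
  finiteIndex_of_finite_quotient

theorem isOpen_normalCore [CompactSpace Γ] {U : Subgroup Γ} (hU : IsOpen (U : Set Γ)) :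
    IsOpen (U.normalCore : Set Γ) :=
  have : U.FiniteIndex := finiteIndex_of_isOpen hU
  isOpen_of_isClosed_of_finiteIndex _ (normalCore_isClosed _ (isClosed_of_isOpen U hU))

theorem exists_le_isOpen_normal_isCompact {G H : Subgroup Γ} (hG : IsCompact (G : Set Γ))
    (hHG : H ≤ G) (hH : IsOpen (H.subgroupOf G : Set G)) :
    ∃ N ≤ H, IsOpen (N.subgroupOf G : Set G) ∧ (N.subgroupOf G).Normal ∧
      IsCompact (N : Set Γ) ∧ N.relIndex H ≠ 0 := by
  have : CompactSpace G := isCompact_iff_compactSpace.mp hG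
  set C := (H.subgroupOf G).normalCore
  have hC : (C.map G.subtype).subgroupOf G = C :=
    comap_map_eq_self_of_injective G.subtype_injective C
  have hCopen : IsOpen (C : Set G) := isOpen_normalCore hH
  have : C.FiniteIndex := finiteIndex_of_isOpen hCopen
  have hHmap : (H.subgroupOf G).map G.subtype = H := map_subgroupOf_eq_of_le hHG
  refine ⟨C.map G.subtype, hHmap ▸ map_mono (normalCore_le _), ?_, ?_, ?_, ?_⟩
  · rwa [hC]
  · rw [hC]
    exact normalCore_normal _
  · rw [coe_map]
    exact (isClosed_of_isOpen C hCopen).isCompact.image continuous_subtype_val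
  · rw [← hHmap, relIndex_map_map_of_injective _ _ G.subtype_injective]
    exact fun h ↦ FiniteIndex.index_ne_zero (index_eq_zero_of_relIndex_eq_zero h)

end Subgroup

theorem GenBySylow.eq_of_relIndex_lt {K : Type*} [Group K] [TopologicalSpace K]
    [IsTopologicalGroup K] {p : ℕ} (hp : p.Prime) {A B : Subgroup K} (hA : GenBySylow A p)
    (hBA : B ≤ A) (hB : IsClosed (B : Set K)) (hnorm : A ≤ Subgroup.normalizer (B : Set K))
    (h0 : B.relIndex A ≠ 0) (hlt : B.relIndex A < p) : B = A := by
  have : (B.subgroupOf A).FiniteIndex := ⟨h0⟩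
  have hopen : IsOpen (B.subgroupOf A : Set A) :=
    Subgroup.isOpen_of_isClosed_of_finiteIndex _ (hB.preimage continuous_subtype_val)
  have htop := hA (B.subgroupOf A) ((Subgroup.normal_subgroupOf_iff_le_normalizer hBA).mpr hnorm)
    hopen h0 (Nat.coprime_of_lt_prime h0 hlt hp).symm
  exact le_antisymm hBA (Subgroup.subgroupOf_eq_top.mp htop)

theorem GenBySylow.map_eq_of_relIndex_lt {Γ K : Type*} [Group Γ] [TopologicalSpace Γ]
    [Group K] [TopologicalSpace K] [IsTopologicalGroup K] [T2Space K] {f : Γ →* K}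
    (hf : Continuous f) {p : ℕ} (hp : p.Prime) {N H : Subgroup Γ} (hNH : N ≤ H)
    (hN : IsCompact (N : Set Γ)) (hnorm : H ≤ Subgroup.normalizer (N : Set Γ))
    (h0 : N.relIndex H ≠ 0) (hlt : N.relIndex H < p) (hgen : GenBySylow (H.map f) p) :
    N.map f = H.map f := by
  have hdvd := Subgroup.relIndex_map_dvd f N H
  have h0' : (N.map f).relIndex (H.map f) ≠ 0 := fun h ↦ h0 (Nat.eq_zero_of_zero_dvd (h ▸ hdvd))
  refine hgen.eq_of_relIndex_lt hp (Subgroup.map_mono hNH) ?_ ?_ h0' ?_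
  · rw [Subgroup.coe_map]
    exact (hN.image hf).isClosed
  · exact (Subgroup.map_mono hnorm).trans (Subgroup.le_normalizer_map f)
  · exact (Nat.le_of_dvd (Nat.pos_of_ne_zero h0) hdvd).trans_lt hlt

theorem finite_setOf_coe_le {L : Set Nat.Primes} (m : ℕ) :
    {ℓ : L | ((ℓ : Nat.Primes) : ℕ) ≤ m}.Finite :=
  (Set.finite_Iic m).preimage fun _ _ _ _ h ↦ Subtype.ext (Subtype.ext h)

theorem CondPlus.of_map_eq {n : ℕ} {L : Set Nat.Primes}
    {H N : Subgroup (Π ℓ : L, GL (Fin n) ℤ_[((ℓ : Nat.Primes) : ℕ)])} (hH : CondPlus n L H)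
    (m : ℕ) (h : ∀ ℓ : L, m < ((ℓ : Nat.Primes) : ℕ) →
      GenBySylow (H.map (Pi.evalMonoidHom _ ℓ)) ((ℓ : Nat.Primes) : ℕ) →
        N.map (Pi.evalMonoidHom _ ℓ) = H.map (Pi.evalMonoidHom _ ℓ)) :
    CondPlus n L N := by
  refine (hH.union (finite_setOf_coe_le m)).subset fun ℓ hℓ ↦ ?_
  by_contra hcon
  simp only [Set.mem_union, Set.mem_ofPred_eq, not_or, not_not, not_le] at hcon
  exact hℓ (h ℓ hcon.2 hcon.1 ▸ hcon.1)

/-- If a closed subgroup `G` of `∏_{ℓ ∈ L} GL n ℤ_[ℓ]` satisfies condition (+) potentially,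
i.e. `G` has an open subgroup satisfying condition (+), then `G` has an open *normal*
subgroup satisfying condition (+). -/
theorem stmt_4 (n : ℕ) (L : Set Nat.Primes)
    (G : Subgroup (Π ℓ : L, GL (Fin n) ℤ_[((ℓ : Nat.Primes) : ℕ)]))
    (hG : IsClosed (G : Set (Π ℓ : L, GL (Fin n) ℤ_[((ℓ : Nat.Primes) : ℕ)])))
    (hpot : ∃ H : Subgroup (Π ℓ : L, GL (Fin n) ℤ_[((ℓ : Nat.Primes) : ℕ)]),
      H ≤ G ∧ IsOpen ((H.subgroupOf G : Subgroup G) : Set G) ∧ CondPlus n L H) :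
    ∃ N : Subgroup (Π ℓ : L, GL (Fin n) ℤ_[((ℓ : Nat.Primes) : ℕ)]),
      N ≤ G ∧ IsOpen ((N.subgroupOf G : Subgroup G) : Set G) ∧
      (N.subgroupOf G).Normal ∧ CondPlus n L N := by
  obtain ⟨H, hHG, hHopen, hH⟩ := hpot
  obtain ⟨N, hNH, hNopen, hNnormal, hNcompact, hN0⟩ :=
    Subgroup.exists_le_isOpen_normal_isCompact hG.isCompact hHG hHopen
  have hNG := hNH.trans hHG
  have hnorm : H ≤ Subgroup.normalizer (N : Set _) :=
    hHG.trans ((Subgroup.normal_subgroupOf_iff_le_normalizer hNG).mp hNnormal)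
  refine ⟨N, hNG, hNopen, hNnormal, hH.of_map_eq (N.relIndex H) fun ℓ hℓ hgen ↦ ?_⟩
  exact hgen.map_eq_of_relIndex_lt (continuous_apply ℓ) (ℓ : Nat.Primes).2 hNH hNcompact hnorm
    hN0 hℓ
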